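/- arXiv:math/0501197 — 3 statements merged into one kernel-verified Lean document; each statement's English description precedes it below -/
import Mathlib

section
/- Let H ∈ (1/4, 1/2) and let p' ∈ (1/H, 4). Then there exists a constant C, depending only on H and p', such that for every finite increasing sequence of reals t_m < t_{m+1} < ... < t_n one has Σ_{k=m}^{n−1} Σ_{l=m}^{n−1} ρ_H(t_k,t_{k+1}; t_l,t_{l+1})² ≤ C (t_n − t_m)^{4/p'} |D|^{4H − 4/p'}, where |D| = max_{m ≤ k ≤ n−1} (t_{k+1} − t_k). -/
/-!
Write `ρ_{kl}` for the covariance of the `k`-th and `l`-th increments and `Δ_k = t_{k+1} − t_k`.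
Since `x ↦ |x|^{2H}` is `2H`-Hölder with constant `1`, `|ρ_{kl}| ≤ Δ_k^{2H}`; since `x ↦ x^{2H}`
is concave, `ρ_{kl} ≤ 0` for `l ≠ k`; and the row sum `Σ_l ρ_{kl} = ρ_H(t_k, t_{k+1}; t_m, t_n)`
is nonnegative. Hence `Σ_l |ρ_{kl}| ≤ 2 Δ_k^{2H}` and `Σ_l ρ_{kl}² ≤ 2 Δ_k^{4H}`. Finally
`Δ_k^{4H} ≤ |D|^{4H − 4/p'} Δ_k^{4/p'}` and, as `4/p' ≥ 1`, `Σ_k Δ_k^{4/p'} ≤ (t_n − t_m)^{4/p'}`;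
so `C = 2` works.
-/

open Set

/-- Covariance of fractional Brownian increments with Hurst parameter `H`:
`ρ_H(a,b;c,d) = (1/2)(|d−a|^{2H} + |c−b|^{2H} − |c−a|^{2H} − |d−b|^{2H})`,
i.e. `E((W_b − W_a)(W_d − W_c))`. -/
noncomputable def fbmCov (H a b c d : ℝ) : ℝ :=
  (|d - a| ^ (2 * H) + |c - b| ^ (2 * H) - |c - a| ^ (2 * H) - |d - b| ^ (2 * H)) / 2

lemma ConcaveOn.map_add_map_le {s : Set ℝ} {f : ℝ → ℝ} (hf : ConcaveOn ℝ s f)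
    {x y z w : ℝ} (hx : x ∈ s) (hw : w ∈ s) (hxy : x ≤ y) (hyw : y ≤ w) (hxz : x ≤ z)
    (hzw : z ≤ w) (hsum : y + z = x + w) : f x + f w ≤ f y + f z := by
  rcases hxy.trans hyw |>.eq_or_lt with rfl | hxw
  · obtain rfl : y = x := le_antisymm hyw hxy
    obtain rfl : z = y := le_antisymm hzw hxz
    rfl
  have hpos : 0 < w - x := sub_pos.mpr hxw
  set θ := (w - y) / (w - x)
  have hθ0 : 0 ≤ θ := div_nonneg (by linarith) hpos.le
  have hθ1 : 0 ≤ 1 - θ := by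
    rw [sub_nonneg, div_le_one hpos]; linarith
  have hy : θ • x + (1 - θ) • w = y := by
    simp only [smul_eq_mul, θ]; field_simp; ring
  have hz : (1 - θ) • x + θ • w = z := by
    simp only [smul_eq_mul, θ]; field_simp; linear_combination (x - w) * hsum
  have h₁ := hf.2 hx hw hθ0 hθ1 (by ring)
  have h₂ := hf.2 hx hw hθ1 hθ0 (by ring)
  rw [hy] at h₁
  rw [hz] at h₂
  simp only [smul_eq_mul] at h₁ h₂
  linarith

lemma Real.rpow_abs_le_rpow_abs_add_rpow_abs_sub {p : ℝ} (hp0 : 0 ≤ p) (hp1 : p ≤ 1) (x y : ℝ) :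
    |x| ^ p ≤ |y| ^ p + |x - y| ^ p :=
  calc |x| ^ p ≤ (|y| + |x - y|) ^ p :=
        Real.rpow_le_rpow (abs_nonneg x) (by linarith [abs_sub_abs_le_abs_sub x y]) hp0
    _ ≤ |y| ^ p + |x - y| ^ p :=
        Real.rpow_add_le_add_rpow (abs_nonneg y) (abs_nonneg _) hp0 hp1

lemma Real.abs_rpow_abs_sub_rpow_abs_le {p : ℝ} (hp0 : 0 ≤ p) (hp1 : p ≤ 1) (x y : ℝ) :
    |(|x| ^ p - |y| ^ p)| ≤ |x - y| ^ p := by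
  have h₁ := Real.rpow_abs_le_rpow_abs_add_rpow_abs_sub hp0 hp1 x y
  have h₂ := Real.rpow_abs_le_rpow_abs_add_rpow_abs_sub hp0 hp1 y x
  rw [abs_sub_comm y x] at h₂
  rw [abs_sub_le_iff]
  constructor <;> linarith

section fbmCov

variable {H : ℝ}

lemma fbmCov_comm (H a b c d : ℝ) : fbmCov H a b c d = fbmCov H c d a b := by
  simp only [fbmCov, abs_sub_comm d a, abs_sub_comm c b, abs_sub_comm c a, abs_sub_comm d b]
  ring

lemma fbmCov_self (hH : H ≠ 0) (a b : ℝ) : fbmCov H a b a b = |b - a| ^ (2 * H) := by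
  simp only [fbmCov, sub_self, abs_zero, Real.zero_rpow (mul_ne_zero two_ne_zero hH),
    abs_sub_comm a b]
  ring

lemma fbmCov_sub_fbmCov (H a b c d e : ℝ) :
    fbmCov H a b e d - fbmCov H a b e c = fbmCov H a b c d := by
  simp only [fbmCov]
  ring

lemma sum_fbmCov_Ico (H a b : ℝ) (t : ℕ → ℝ) {m n : ℕ} (hmn : m ≤ n) :
    ∑ l ∈ Finset.Ico m n, fbmCov H a b (t l) (t (l + 1)) = fbmCov H a b (t m) (t n) := by
  calc ∑ l ∈ Finset.Ico m n, fbmCov H a b (t l) (t (l + 1))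
      = ∑ l ∈ Finset.Ico m n, (fbmCov H a b 0 (t (l + 1)) - fbmCov H a b 0 (t l)) :=
        Finset.sum_congr rfl fun l _ => (fbmCov_sub_fbmCov H a b _ _ 0).symm
    _ = fbmCov H a b (t m) (t n) := by
        rw [Finset.sum_Ico_sub (fun l => fbmCov H a b 0 (t l)) hmn, fbmCov_sub_fbmCov]

lemma abs_fbmCov_le (hH0 : 0 ≤ H) (hH1 : H ≤ 1 / 2) (a b c d : ℝ) :
    |fbmCov H a b c d| ≤ |b - a| ^ (2 * H) := by
  have hp0 : 0 ≤ 2 * H := by linarith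
  have hp1 : 2 * H ≤ 1 := by linarith
  have h₁ := Real.abs_rpow_abs_sub_rpow_abs_le hp0 hp1 (d - a) (d - b)
  have h₂ := Real.abs_rpow_abs_sub_rpow_abs_le hp0 hp1 (c - b) (c - a)
  rw [show d - a - (d - b) = b - a by ring] at h₁
  rw [show c - b - (c - a) = -(b - a) by ring, abs_neg] at h₂
  have h := abs_add_le (|d - a| ^ (2 * H) - |d - b| ^ (2 * H))
    (|c - b| ^ (2 * H) - |c - a| ^ (2 * H))
  have e : fbmCov H a b c d = ((|d - a| ^ (2 * H) - |d - b| ^ (2 * H)) +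
      (|c - b| ^ (2 * H) - |c - a| ^ (2 * H))) / 2 := by
    rw [fbmCov]; ring
  rw [e, abs_div, abs_two, div_le_iff₀ two_pos]
  linarith

lemma fbmCov_nonpos_of_le (hH0 : 0 ≤ H) (hH1 : H ≤ 1 / 2) {a b c d : ℝ}
    (hab : a ≤ b) (hbc : b ≤ c) (hcd : c ≤ d) : fbmCov H a b c d ≤ 0 := by
  have h := (Real.concaveOn_rpow (p := 2 * H) (by linarith) (by linarith)).map_add_map_le
    (x := c - b) (y := c - a) (z := d - b) (w := d - a) (sub_nonneg.mpr hbc)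
    (sub_nonneg.mpr (hab.trans (hbc.trans hcd))) (by linarith) (by linarith) (by linarith)
    (by linarith) (by ring)
  rw [fbmCov, abs_of_nonneg (by linarith : 0 ≤ d - a), abs_of_nonneg (sub_nonneg.mpr hbc),
    abs_of_nonneg (by linarith : 0 ≤ c - a), abs_of_nonneg (by linarith : 0 ≤ d - b)]
  linarith

lemma fbmCov_nonneg_of_le (hH0 : 0 ≤ H) {a b c d : ℝ}
    (hca : c ≤ a) (hab : a ≤ b) (hbd : b ≤ d) : 0 ≤ fbmCov H a b c d := by
  have hp0 : 0 ≤ 2 * H := by linarith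
  have h₁ : (d - b) ^ (2 * H) ≤ (d - a) ^ (2 * H) :=
    Real.rpow_le_rpow (by linarith) (by linarith) hp0
  have h₂ : (a - c) ^ (2 * H) ≤ (b - c) ^ (2 * H) :=
    Real.rpow_le_rpow (by linarith) (by linarith) hp0
  rw [fbmCov, abs_of_nonneg (by linarith : 0 ≤ d - a), abs_sub_comm c b,
    abs_of_nonneg (by linarith : 0 ≤ b - c), abs_sub_comm c a,
    abs_of_nonneg (by linarith : 0 ≤ a - c), abs_of_nonneg (by linarith : 0 ≤ d - b)]
  linarith

variable {m n k : ℕ} {t : ℕ → ℝ}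

lemma sum_abs_fbmCov_le (hH0 : 0 < H) (hH1 : H ≤ 1 / 2) (ht : MonotoneOn t (Icc m n))
    (hk : k ∈ Finset.Ico m n) :
    ∑ l ∈ Finset.Ico m n, |fbmCov H (t k) (t (k + 1)) (t l) (t (l + 1))| ≤
      2 * (t (k + 1) - t k) ^ (2 * H) := by
  obtain ⟨hmk, hkn⟩ := Finset.mem_Ico.mp hk
  have hle : ∀ i j, m ≤ i → i ≤ j → j ≤ n → t i ≤ t j := fun i j hi hij hj =>
    ht ⟨hi, hij.trans hj⟩ ⟨hi.trans hij, hj⟩ hij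
  have hΔ : 0 ≤ t (k + 1) - t k := sub_nonneg.mpr (hle k (k + 1) hmk (by omega) hkn)
  have hdiag : fbmCov H (t k) (t (k + 1)) (t k) (t (k + 1)) = (t (k + 1) - t k) ^ (2 * H) := by
    rw [fbmCov_self hH0.ne', abs_of_nonneg hΔ]
  have hoff : ∀ l ∈ Finset.Ico m n, l ≠ k →
      fbmCov H (t k) (t (k + 1)) (t l) (t (l + 1)) ≤ 0 := by
    intro l hl hlk
    obtain ⟨hml, hln⟩ := Finset.mem_Ico.mp hl
    rcases hlk.lt_or_gt with hlk | hkl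
    · rw [fbmCov_comm]
      exact fbmCov_nonpos_of_le hH0.le hH1 (hle l (l + 1) hml (by omega) (by omega))
        (hle (l + 1) k (by omega) hlk (by omega)) (hle k (k + 1) hmk (by omega) hkn)
    · exact fbmCov_nonpos_of_le hH0.le hH1 (hle k (k + 1) hmk (by omega) hkn)
        (hle (k + 1) l (by omega) hkl hln.le) (hle l (l + 1) hml (by omega) hln)
  have hrow : 0 ≤ ∑ l ∈ Finset.Ico m n, fbmCov H (t k) (t (k + 1)) (t l) (t (l + 1)) := by
    rw [sum_fbmCov_Ico H _ _ t (hmk.trans hkn.le)]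
    exact fbmCov_nonneg_of_le hH0.le (hle m k le_rfl hmk hkn.le)
      (hle k (k + 1) hmk (by omega) hkn) (hle (k + 1) n (by omega) hkn le_rfl)
  -- `|x| + x = 0` for `x ≤ 0`, so only the diagonal term survives
  have hsum : ∑ l ∈ Finset.Ico m n,
      (|fbmCov H (t k) (t (k + 1)) (t l) (t (l + 1))| +
        fbmCov H (t k) (t (k + 1)) (t l) (t (l + 1))) = 2 * (t (k + 1) - t k) ^ (2 * H) := by
    rw [Finset.sum_eq_single_of_mem k hk fun l hl hlk => by
      rw [abs_of_nonpos (hoff l hl hlk), neg_add_cancel], hdiag,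
      abs_of_nonneg (Real.rpow_nonneg hΔ _)]
    ring
  rw [Finset.sum_add_distrib] at hsum
  linarith

lemma sum_sq_fbmCov_le (hH0 : 0 < H) (hH1 : H ≤ 1 / 2) (ht : MonotoneOn t (Icc m n))
    (hk : k ∈ Finset.Ico m n) :
    ∑ l ∈ Finset.Ico m n, fbmCov H (t k) (t (k + 1)) (t l) (t (l + 1)) ^ 2 ≤
      2 * (t (k + 1) - t k) ^ (4 * H) := by
  obtain ⟨hmk, hkn⟩ := Finset.mem_Ico.mp hk
  have hΔ : 0 ≤ t (k + 1) - t k :=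
    sub_nonneg.mpr (ht ⟨hmk, by omega⟩ ⟨by omega, by omega⟩ (by omega))
  calc ∑ l ∈ Finset.Ico m n, fbmCov H (t k) (t (k + 1)) (t l) (t (l + 1)) ^ 2
      ≤ ∑ l ∈ Finset.Ico m n,
          (t (k + 1) - t k) ^ (2 * H) * |fbmCov H (t k) (t (k + 1)) (t l) (t (l + 1))| := by
        refine Finset.sum_le_sum fun l _ => ?_
        rw [← sq_abs, sq, ← abs_of_nonneg hΔ]
        exact mul_le_mul_of_nonneg_right (abs_fbmCov_le hH0.le hH1 _ _ _ _) (abs_nonneg _)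
    _ ≤ (t (k + 1) - t k) ^ (2 * H) * (2 * (t (k + 1) - t k) ^ (2 * H)) := by
        rw [← Finset.mul_sum]
        exact mul_le_mul_of_nonneg_left (sum_abs_fbmCov_le hH0 hH1 ht hk)
          (Real.rpow_nonneg hΔ _)
    _ = 2 * (t (k + 1) - t k) ^ (4 * H) := by
        rw [show 4 * H = 2 * H + 2 * H by ring, Real.rpow_add' hΔ (by linarith)]
        ring

end fbmCov

lemma Finset.sum_rpow_le_rpow_mul_rpow_sum {ι : Type*} (s : Finset ι) {x : ι → ℝ} {q r δ : ℝ}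
    (hq : 1 ≤ q) (hqr : q ≤ r) (hx : ∀ i ∈ s, 0 ≤ x i) (hxδ : ∀ i ∈ s, x i ≤ δ) :
    ∑ i ∈ s, x i ^ r ≤ δ ^ (r - q) * (∑ i ∈ s, x i) ^ q := by
  set S := ∑ i ∈ s, x i
  have hS : 0 ≤ S := Finset.sum_nonneg hx
  calc ∑ i ∈ s, x i ^ r = ∑ i ∈ s, x i ^ (r - q) * x i ^ (q - 1) * x i := by
        refine Finset.sum_congr rfl fun i hi => ?_
        rw [mul_assoc, ← Real.rpow_add_one' (hx i hi) (by linarith), sub_add_cancel,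
          ← Real.rpow_add' (hx i hi) (by linarith), sub_add_cancel]
    _ ≤ ∑ i ∈ s, δ ^ (r - q) * S ^ (q - 1) * x i := by
        refine Finset.sum_le_sum fun i hi => ?_
        have hxi := hx i hi
        have hδ : 0 ≤ δ := hxi.trans (hxδ i hi)
        gcongr ?_ * ?_ * _
        · exact Real.rpow_le_rpow hxi (hxδ i hi) (sub_nonneg.mpr hqr)
        · exact Real.rpow_le_rpow hxi (Finset.single_le_sum hx hi) (by linarith)
    _ = δ ^ (r - q) * S ^ q := by
        rw [← Finset.mul_sum, mul_assoc, ← Real.rpow_add_one' hS (by linarith), sub_add_cancel]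

/-- For `H ∈ (1/4,1/2)` and `p' ∈ (1/H,4)` there is a constant `C = C(H,p')` such that for
every subdivision `t_m < … < t_n`,
`Σ_{k,l} ρ_H(t_k,t_{k+1};t_l,t_{l+1})² ≤ C (t_n−t_m)^{4/p'} |D|^{4H−4/p'}`
where `|D|` is the mesh of the subdivision. -/
theorem fbmCov_subdivision_sq_sum_le (H p' : ℝ)
    (hH : H ∈ Ioo (1 / 4 : ℝ) (1 / 2)) (hp' : p' ∈ Ioo (1 / H) 4) :
    ∃ C : ℝ, ∀ (m n : ℕ) (hmn : m < n) (t : ℕ → ℝ),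
      (∀ k, m ≤ k → k < n → t k < t (k + 1)) →
      ∑ k ∈ Finset.Ico m n, ∑ l ∈ Finset.Ico m n,
          (fbmCov H (t k) (t (k + 1)) (t l) (t (l + 1))) ^ 2 ≤
        C * (t n - t m) ^ (4 / p') *
          ((Finset.Ico m n).sup' (Finset.nonempty_Ico.mpr hmn)
              fun k => t (k + 1) - t k) ^ (4 * H - 4 / p') := by
  obtain ⟨hH0, hH1⟩ := hH
  obtain ⟨hp'H, hp'4⟩ := hp'
  have hp'0 : 0 < p' := (one_div_pos.mpr (by linarith)).trans hp'H
  have hq : 1 ≤ 4 / p' := (one_le_div₀ hp'0).mpr hp'4.le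
  have hqr : 4 / p' ≤ 4 * H := by
    rw [div_le_iff₀ hp'0]
    nlinarith [(div_lt_iff₀ (by linarith : 0 < H)).mp hp'H]
  refine ⟨2, fun m n hmn t ht => ?_⟩
  have hmono : MonotoneOn t (Icc m n) := monotoneOn_of_le_add_one ordConnected_Icc
    fun k _ hk hk1 => (ht k hk.1 (Nat.lt_of_succ_le hk1.2)).le
  calc ∑ k ∈ Finset.Ico m n, ∑ l ∈ Finset.Ico m n,
        (fbmCov H (t k) (t (k + 1)) (t l) (t (l + 1))) ^ 2
      ≤ 2 * ∑ k ∈ Finset.Ico m n, (t (k + 1) - t k) ^ (4 * H) := by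
        rw [Finset.mul_sum]
        exact Finset.sum_le_sum fun k hk => sum_sq_fbmCov_le (by linarith) hH1.le hmono hk
    _ ≤ 2 * (t n - t m) ^ (4 / p') *
          ((Finset.Ico m n).sup' (Finset.nonempty_Ico.mpr hmn)
              fun k => t (k + 1) - t k) ^ (4 * H - 4 / p') := by
        rw [mul_assoc, mul_comm ((t n - t m) ^ _), ← Finset.sum_Ico_sub t hmn.le]
        gcongr
        exact Finset.sum_rpow_le_rpow_mul_rpow_sum _ hq hqr
          (fun k hk => (sub_pos.mpr (ht k (Finset.mem_Ico.mp hk).1 (Finset.mem_Ico.mp hk).2)).le)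
          (fun k hk => Finset.le_sup' (fun k => t (k + 1) - t k) hk)
end

section
/- Let E be a normed vector space, 0 < β < α ≤ 1, M ≥ 0, and let x : [0,1] → E be α-Hölder with constant M. Let D be a subdivision of [0,1] with mesh |D| and let x^D be the piecewise-linear interpolation of x along D. Then for all 0 ≤ s < t ≤ 1, ‖(x^D(t) − x(t)) − (x^D(s) − x(s))‖ ≤ 4M |t−s|^β |D|^{α−β}. In particular the β-Hölder distance between x and x^D is at most 4M|D|^{α−β}. -/
/-!
On a segment `[a, b]` of the subdivision the error `e = x^D - x` has increments
`e v - e u = r • (x b - x a) - (x v - x u)` with `r = (v - u) / (b - a) ∈ [0, 1]`. The Hölder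
bound controls both terms by `M r ^ β (b - a) ^ α = M (v - u) ^ β (b - a) ^ (α - β)`, since
`r ≤ r ^ β` and `r ^ α ≤ r ^ β`. As `e` vanishes at the nodes, for `s` and `t` in different
segments one splits `e t - e s` at the node after `s` and the node before `t`, which doubles
the constant.
-/

open Set

theorem div_rpow_mul_rpow_eq {h Δ : ℝ} (hh : 0 ≤ h) (hΔ : 0 < Δ) (α β : ℝ) :
    (h / Δ) ^ β * Δ ^ α = h ^ β * Δ ^ (α - β) := by
  rw [Real.div_rpow hh hΔ.le, Real.rpow_sub hΔ]
  ring

theorem norm_interp_sub_sub_le {E : Type*} [NormedAddCommGroup E] [NormedSpace ℝ E]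
    {x y : ℝ → E} {a b α β M : ℝ} (hab : a < b) (hβ : 0 ≤ β) (hβα : β ≤ α) (hβ1 : β ≤ 1)
    (hM : 0 ≤ M) (hx : ∀ u ∈ Icc a b, ∀ v ∈ Icc a b, ‖x v - x u‖ ≤ M * |v - u| ^ α)
    (hy : ∀ u ∈ Icc a b, y u = x a + ((u - a) / (b - a)) • (x b - x a))
    {D : ℝ} (hD : b - a ≤ D) {u v : ℝ} (hau : a ≤ u) (huv : u ≤ v) (hvb : v ≤ b) :
    ‖(y v - x v) - (y u - x u)‖ ≤ 2 * M * D ^ (α - β) * (v - u) ^ β := by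
  have hΔ : 0 < b - a := sub_pos.2 hab
  set r := (v - u) / (b - a) with hr
  have hr0 : 0 ≤ r := div_nonneg (sub_nonneg.2 huv) hΔ.le
  have hr1 : r ≤ 1 := (div_le_one hΔ).2 (by linarith)
  have hdiff : (y v - x v) - (y u - x u) = r • (x b - x a) - (x v - x u) := by
    rw [hy u ⟨hau, huv.trans hvb⟩, hy v ⟨hau.trans huv, hvb⟩, hr]
    module
  have hchord : ‖r • (x b - x a)‖ ≤ M * (r ^ β * (b - a) ^ α) :=
    calc ‖r • (x b - x a)‖ = r * ‖x b - x a‖ := by rw [norm_smul, Real.norm_of_nonneg hr0]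
      _ ≤ r * (M * (b - a) ^ α) := by
        gcongr
        simpa [abs_of_pos hΔ] using hx a ⟨le_rfl, hab.le⟩ b ⟨hab.le, le_rfl⟩
      _ ≤ r ^ β * (M * (b - a) ^ α) := by
        gcongr
        simpa using Real.rpow_le_rpow_of_exponent_ge' hr0 hr1 hβ hβ1
      _ = M * (r ^ β * (b - a) ^ α) := by ring
  have hincr : ‖x v - x u‖ ≤ M * (r ^ β * (b - a) ^ α) :=
    calc ‖x v - x u‖ ≤ M * (v - u) ^ α := by
          simpa [abs_of_nonneg (sub_nonneg.2 huv)] using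
            hx u ⟨hau, huv.trans hvb⟩ v ⟨hau.trans huv, hvb⟩
      _ = M * (r ^ α * (b - a) ^ α) := by
          rw [← Real.mul_rpow hr0 hΔ.le, hr, div_mul_cancel₀ _ hΔ.ne']
      _ ≤ M * (r ^ β * (b - a) ^ α) := by
          gcongr M * (?_ * _)
          exact Real.rpow_le_rpow_of_exponent_ge' hr0 hr1 hβ hβα
  calc ‖(y v - x v) - (y u - x u)‖ = ‖r • (x b - x a) - (x v - x u)‖ := by rw [hdiff]
    _ ≤ ‖r • (x b - x a)‖ + ‖x v - x u‖ := norm_sub_le _ _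
    _ ≤ 2 * M * (r ^ β * (b - a) ^ α) := by linarith
    _ = 2 * M * (b - a) ^ (α - β) * (v - u) ^ β := by
        rw [hr, div_rpow_mul_rpow_eq (sub_nonneg.2 huv) hΔ]
        ring
    _ ≤ 2 * M * D ^ (α - β) * (v - u) ^ β := by gcongr

theorem interp_sub_eq_zero_at_nodes {E : Type*} [AddCommGroup E] [Module ℝ E]
    {x y : ℝ → E} {tt : ℕ → ℝ} {N : ℕ} (hN : 0 < N) (hmono : ∀ i < N, tt i < tt (i + 1))
    (hy : ∀ i < N, ∀ u ∈ Icc (tt i) (tt (i + 1)),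
      y u = x (tt i) + ((u - tt i) / (tt (i + 1) - tt i)) • (x (tt (i + 1)) - x (tt i))) :
    ∀ i ≤ N, y (tt i) - x (tt i) = 0 := by
  intro i hi
  rcases hi.lt_or_eq with hi | rfl
  · simp [hy i hi (tt i) ⟨le_rfl, (hmono i hi).le⟩]
  · obtain ⟨j, rfl⟩ := Nat.exists_eq_add_one_of_ne_zero hN.ne'
    have hj := hmono j j.lt_succ_self
    simp [hy j j.lt_succ_self _ ⟨hj.le, le_rfl⟩, div_self (sub_pos.2 hj).ne']

theorem exists_mem_Icc_succ_of_mem_Icc {α : Type*} [LinearOrder α] {f : ℕ → α} {n : ℕ}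
    (hn : 0 < n) {u : α} (hu : u ∈ Icc (f 0) (f n)) : ∃ i < n, u ∈ Icc (f i) (f (i + 1)) := by
  induction n, hn using Nat.le_induction with
  | base => exact ⟨0, zero_lt_one, hu⟩
  | succ n hn ih =>
    rcases le_or_gt u (f n) with hun | hnu
    · obtain ⟨i, hi, hiu⟩ := ih ⟨hu.1, hun⟩
      exact ⟨i, by omega, hiu⟩
    · exact ⟨n, n.lt_succ_self, hnu.le, hu.2⟩

theorem norm_sub_le_of_eq_zero_at_nodes {E : Type*} [NormedAddCommGroup E] {tt : ℕ → ℝ} {N : ℕ}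
    (hN : 0 < N) (hmono : MonotoneOn tt (Iic N)) {e : ℝ → E} {C β : ℝ} (hC : 0 ≤ C) (hβ : 0 ≤ β)
    (hnode : ∀ i ≤ N, e (tt i) = 0)
    (hseg : ∀ i < N, ∀ u ∈ Icc (tt i) (tt (i + 1)), ∀ v ∈ Icc u (tt (i + 1)),
      ‖e v - e u‖ ≤ C * (v - u) ^ β)
    {s t : ℝ} (hs : tt 0 ≤ s) (hst : s ≤ t) (ht : t ≤ tt N) :
    ‖e t - e s‖ ≤ 2 * C * (t - s) ^ β := by
  obtain ⟨i, hi, hsi⟩ := exists_mem_Icc_succ_of_mem_Icc hN ⟨hs, hst.trans ht⟩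
  obtain ⟨j, hj, htj⟩ := exists_mem_Icc_succ_of_mem_Icc hN ⟨hs.trans hst, ht⟩
  have hpow : 0 ≤ C * (t - s) ^ β := mul_nonneg hC (Real.rpow_nonneg (sub_nonneg.2 hst) β)
  rcases lt_or_ge i j with hij | hji
  · have hnodes : tt (i + 1) ≤ tt j :=
      hmono (mem_Iic.2 (by omega)) (mem_Iic.2 hj.le) hij
    have hright : ‖e t - e (tt j)‖ ≤ C * (t - s) ^ β :=
      (hseg j hj _ ⟨le_rfl, htj.1.trans htj.2⟩ t htj).trans (by gcongr <;> linarith [htj.1, hsi.2])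
    have hleft : ‖e (tt (i + 1)) - e s‖ ≤ C * (t - s) ^ β :=
      (hseg i hi s hsi _ ⟨hsi.2, le_rfl⟩).trans (by gcongr <;> linarith [htj.1, hsi.2])
    calc ‖e t - e s‖ = ‖(e t - e (tt j)) + (e (tt (i + 1)) - e s)‖ := by
          rw [hnode j hj.le, hnode (i + 1) hi, sub_zero, zero_sub, ← sub_eq_add_neg]
      _ ≤ 2 * C * (t - s) ^ β := by linarith [norm_add_le (e t - e (tt j)) (e (tt (i + 1)) - e s)]
  · have hti : t ≤ tt (i + 1) :=
      htj.2.trans (hmono (mem_Iic.2 (by omega)) (mem_Iic.2 (by omega)) (by omega))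
    linarith [hseg i hi s hsi t ⟨hst, hti⟩]

/-- If `x : [0,1] → E` is `α`-Hölder with constant `M`, `0 < β < α ≤ 1`, and `x^D` is the
piecewise-linear interpolation of `x` along a subdivision `D` of `[0,1]` with mesh `|D|`, then
`‖(x^D(t) − x(t)) − (x^D(s) − x(s))‖ ≤ 4M |t−s|^β |D|^{α−β}` for all `0 ≤ s < t ≤ 1`. -/
theorem piecewiseLinear_holder_dist {E : Type*} [NormedAddCommGroup E] [NormedSpace ℝ E]
    (α β M : ℝ) (hβ : 0 < β) (hβα : β < α) (hα : α ≤ 1) (hM : 0 ≤ M)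
    (x : ℝ → E)
    (hx : ∀ s ∈ Icc (0 : ℝ) 1, ∀ t ∈ Icc (0 : ℝ) 1, ‖x t - x s‖ ≤ M * |t - s| ^ α)
    (N : ℕ) (hN : 0 < N) (tt : ℕ → ℝ) (ht0 : tt 0 = 0) (htN : tt N = 1)
    (hmono : ∀ i < N, tt i < tt (i + 1))
    (xD : ℝ → E)
    (hxD : ∀ i < N, ∀ u ∈ Icc (tt i) (tt (i + 1)),
      xD u = x (tt i) + ((u - tt i) / (tt (i + 1) - tt i)) • (x (tt (i + 1)) - x (tt i))) :
    ∀ s t : ℝ, 0 ≤ s → s < t → t ≤ 1 →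
      ‖(xD t - x t) - (xD s - x s)‖ ≤
        4 * M * |t - s| ^ β *
          ((Finset.range N).sup' (Finset.nonempty_range_iff.mpr hN.ne')
              fun i => tt (i + 1) - tt i) ^ (α - β) := by
  intro s t hs hst ht
  set D := (Finset.range N).sup' (Finset.nonempty_range_iff.mpr hN.ne') fun i => tt (i + 1) - tt i
  have hmonoOn : MonotoneOn tt (Iic N) := (strictMonoOn_Iic_of_lt_succ hmono).monotoneOn
  have hsegIcc : ∀ i < N, Icc (tt i) (tt (i + 1)) ⊆ Icc 0 1 := fun i hi =>
    ht0 ▸ htN ▸ Icc_subset_Icc (hmonoOn (mem_Iic.2 hN.le) (mem_Iic.2 hi.le) (Nat.zero_le i))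
      (hmonoOn (mem_Iic.2 hi) (mem_Iic.2 le_rfl) hi)
  have hmesh : ∀ i < N, tt (i + 1) - tt i ≤ D := fun i hi =>
    Finset.le_sup' (fun i => tt (i + 1) - tt i) (Finset.mem_range.2 hi)
  have hD : 0 ≤ D := (sub_pos.2 (hmono 0 hN)).le.trans (hmesh 0 hN)
  have hseg : ∀ i < N, ∀ u ∈ Icc (tt i) (tt (i + 1)), ∀ v ∈ Icc u (tt (i + 1)),
      ‖(xD v - x v) - (xD u - x u)‖ ≤ 2 * M * D ^ (α - β) * (v - u) ^ β :=
    fun i hi u hu v hv =>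
      norm_interp_sub_sub_le (hmono i hi) hβ.le hβα.le (hβα.le.trans hα) hM
        (fun u hu v hv => hx u (hsegIcc i hi hu) v (hsegIcc i hi hv)) (hxD i hi) (hmesh i hi)
        hu.1 hv.1 hv.2
  calc ‖(xD t - x t) - (xD s - x s)‖ ≤ 2 * (2 * M * D ^ (α - β)) * (t - s) ^ β :=
        norm_sub_le_of_eq_zero_at_nodes hN hmonoOn (by positivity) hβ.le
          (interp_sub_eq_zero_at_nodes hN hmono hxD) hseg (ht0 ▸ hs) hst.le (htN ▸ ht)
    _ = 4 * M * |t - s| ^ β * D ^ (α - β) := by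
        rw [abs_of_pos (sub_pos.2 hst)]
        ring
end

section
/- Let H ∈ (0, 1/2) and let (W¹_t)_{t∈[0,1]} and (W²_t)_{t∈[0,1]} be two independent fractional Brownian motions with Hurst parameter H, each with continuous sample paths, on a common probability space. For 0 ≤ s < t ≤ 1 define the real random variable Y_{s,t} = ( (t−s)^{−2} ∫_s^t [ (u−s)(W¹_t − W¹_u) − (t−u)(W¹_u − W¹_s) ] du ) · (W²_t − W²_s). Then for all 0 ≤ s' < t' ≤ s < t ≤ 1: |E( Y_{s',t'} · Y_{s,t} )| ≤ ρ_H(s',t';s,t)², where ρ_H(a,b;c,d) = (1/2)(|d−a|^{2H} + |c−b|^{2H} − |c−a|^{2H} − |d−b|^{2H}). -/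
open Set MeasureTheory ProbabilityTheory

/-- A (one-dimensional) fractional Brownian motion with Hurst parameter `H` on `[0,1]`:
a measurable process such that every finite linear combination `Σ aᵢ W_{tᵢ}` is a centered
Gaussian random variable, with covariance
`E(W_s W_t) = (1/2)(s^{2H} + t^{2H} − |t−s|^{2H})`. -/
def IsFBM {Ω : Type*} [MeasurableSpace Ω] (P : Measure Ω) (H : ℝ) (W : ℝ → Ω → ℝ) : Prop :=
  (∀ t ∈ Icc (0 : ℝ) 1, Measurable (W t)) ∧
  (∀ (n : ℕ) (a : Fin n → ℝ) (ts : Fin n → ℝ), (∀ i, ts i ∈ Icc (0 : ℝ) 1) →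
    ∃ v : NNReal, Measure.map (fun ω => ∑ i, a i * W (ts i) ω) P = gaussianReal 0 v) ∧
  (∀ s ∈ Icc (0 : ℝ) 1, ∀ t ∈ Icc (0 : ℝ) 1,
    ∫ ω, W s ω * W t ω ∂P = (s ^ (2 * H) + t ^ (2 * H) - |t - s| ^ (2 * H)) / 2)

/-- The random variable
`Y_{s,t} = ((t−s)^{−2} ∫_s^t [(u−s)(W¹_t − W¹_u) − (t−u)(W¹_u − W¹_s)] du)·(W²_t − W²_s)`. -/
noncomputable def Yproc {Ω : Type*} (W1 W2 : ℝ → Ω → ℝ) (s t : ℝ) (ω : Ω) : ℝ :=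
  ((t - s) ^ 2)⁻¹ *
    (∫ u in s..t, ((u - s) * (W1 t ω - W1 u ω) - (t - u) * (W1 u ω - W1 s ω))) *
    (W2 t ω - W2 s ω)

/-!
Write `Y_{s,t} = X_{s,t} (W²_t − W²_s)`, where `X_{s,t} = (t−s)⁻² ∫_s^t ψ_{s,t}(u) du`, with
`ψ_{s,t}` the integrand in `Yproc`, only depends on `W¹`. By independence
`E(Y_{s',t'} Y_{s,t}) = E(X_{s',t'} X_{s,t}) · ρ_H(s',t';s,t)`, so it suffices to show
`|E(X_{s',t'} X_{s,t})| ≤ −ρ_H(s',t';s,t)`. By Fubini, `E(X_{s',t'} X_{s,t})` is the average over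
`(u,v) ∈ [s',t'] × [s,t]` of `((t'−s')(t−s))⁻¹ E(ψ_{s',t'}(u) ψ_{s,t}(v))`, and this mixed moment
is a combination of four covariances of increments over subintervals of `[s',t']` and `[s,t]`,
with nonnegative weights summing to `(t'−s')(t−s)`. For `H ≤ 1/2`, concavity of `x ↦ x^{2H}` makes
the covariance of increments over disjoint intervals nonpositive; since it is additive in each
interval, every such covariance is bounded in absolute value by `−ρ_H(s',t';s,t)`.
-/

theorem ConcaveOn.map_add_map_le_of_add_eq {s : Set ℝ} {f : ℝ → ℝ} (hf : ConcaveOn ℝ s f)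
    {a b c d : ℝ} (ha : a ∈ s) (hd : d ∈ s) (hab : a ≤ b) (hbd : b ≤ d) (h : a + d = b + c) :
    f a + f d ≤ f b + f c := by
  rcases hab.eq_or_lt with rfl | hab
  · rw [show c = d by linarith]
  have hda : 0 < d - a := by linarith
  obtain ⟨θ, hθ⟩ : ∃ θ, θ = (d - b) / (d - a) := ⟨_, rfl⟩
  have hθ₀ : 0 ≤ θ := hθ ▸ div_nonneg (by linarith) hda.le
  have hθ₁ : 0 ≤ 1 - θ := by rw [hθ, sub_nonneg, div_le_one hda]; linarith
  have hb : θ * a + (1 - θ) * d = b := by rw [hθ]; field_simp; ring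
  have hc : (1 - θ) * a + θ * d = c := by rw [hθ, show c = a + d - b by linarith]; field_simp; ring
  have key_b := hf.2 ha hd hθ₀ hθ₁ (by ring)
  have key_c := hf.2 ha hd hθ₁ hθ₀ (by ring)
  simp only [smul_eq_mul, hb, hc] at key_b key_c
  linarith

theorem fbmCov_nonpos {H : ℝ} (hH₀ : 0 ≤ H) (hH₁ : H ≤ 1 / 2) {a b c d : ℝ}
    (hab : a ≤ b) (hbc : b ≤ c) (hcd : c ≤ d) : fbmCov H a b c d ≤ 0 := by
  have key := (Real.concaveOn_rpow (p := 2 * H) (by linarith) (by linarith))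
    |>.map_add_map_le_of_add_eq (a := c - b) (b := c - a) (c := d - b) (d := d - a)
      (mem_Ici.2 (by linarith)) (mem_Ici.2 (by linarith)) (by linarith) (by linarith) (by ring)
  rw [fbmCov, abs_of_nonneg (by linarith : 0 ≤ d - a), abs_of_nonneg (by linarith : 0 ≤ c - b),
    abs_of_nonneg (by linarith : 0 ≤ c - a), abs_of_nonneg (by linarith : 0 ≤ d - b)]
  linarith

theorem fbmCov_add_left (H a x b c d : ℝ) :
    fbmCov H a x c d + fbmCov H x b c d = fbmCov H a b c d := by
  simp only [fbmCov]; ring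

theorem fbmCov_add_right (H a b c y d : ℝ) :
    fbmCov H a b c y + fbmCov H a b y d = fbmCov H a b c d := by
  simp only [fbmCov]; ring

theorem abs_fbmCov_le_neg_fbmCov {H : ℝ} (hH₀ : 0 ≤ H) (hH₁ : H ≤ 1 / 2)
    {s' a b t' s c d t : ℝ} (hs'a : s' ≤ a) (hab : a ≤ b) (hbt' : b ≤ t') (ht's : t' ≤ s)
    (hsc : s ≤ c) (hcd : c ≤ d) (hdt : d ≤ t) :
    |fbmCov H a b c d| ≤ -fbmCov H s' t' s t := by
  have h₁ := fbmCov_nonpos hH₀ hH₁ hs'a (by linarith) (by linarith : s ≤ t)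
  have h₂ := fbmCov_nonpos hH₀ hH₁ hbt' ht's (by linarith : s ≤ t)
  have h₃ := fbmCov_nonpos hH₀ hH₁ hab (by linarith) hsc
  have h₄ := fbmCov_nonpos hH₀ hH₁ hab (by linarith) hcd
  have h₅ := fbmCov_nonpos hH₀ hH₁ hab (by linarith) hdt
  have e₁ := fbmCov_add_left H s' a t' s t
  have e₂ := fbmCov_add_left H a b t' s t
  have e₃ := fbmCov_add_right H a b s c t
  have e₄ := fbmCov_add_right H a b c d t
  rw [abs_of_nonpos h₄]
  linarith

theorem abs_fbmCov_le_one {H : ℝ} (hH : 0 ≤ H) {a b c d : ℝ} (ha : a ∈ Icc (0 : ℝ) 1)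
    (hb : b ∈ Icc (0 : ℝ) 1) (hc : c ∈ Icc (0 : ℝ) 1) (hd : d ∈ Icc (0 : ℝ) 1) :
    |fbmCov H a b c d| ≤ 1 := by
  have bound : ∀ x ∈ Icc (0 : ℝ) 1, ∀ y ∈ Icc (0 : ℝ) 1, |x - y| ^ (2 * H) ∈ Icc (0 : ℝ) 1 :=
    fun x hx y hy => ⟨by positivity, Real.rpow_le_one (abs_nonneg _)
      (abs_sub_le_iff.2 ⟨by linarith [hx.2, hy.1], by linarith [hx.1, hy.2]⟩) (by positivity)⟩
  have h₁ := bound d hd a ha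
  have h₂ := bound c hc b hb
  have h₃ := bound c hc a ha
  have h₄ := bound d hd b hb
  rw [fbmCov, abs_le]
  constructor <;> linarith [h₁.1, h₁.2, h₂.1, h₂.2, h₃.1, h₃.2, h₄.1, h₄.2]

theorem abs_mul_sub_mul_sub_mul_add_mul_le {α β γ δ x₁ x₂ x₃ x₄ K : ℝ} (hα : 0 ≤ α) (hβ : 0 ≤ β)
    (hγ : 0 ≤ γ) (hδ : 0 ≤ δ) (h₁ : |x₁| ≤ K) (h₂ : |x₂| ≤ K) (h₃ : |x₃| ≤ K) (h₄ : |x₄| ≤ K) :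
    |α * γ * x₁ - α * δ * x₂ - β * γ * x₃ + β * δ * x₄| ≤ (α + β) * (γ + δ) * K := by
  have bound : ∀ {w x : ℝ}, 0 ≤ w → |x| ≤ K → |w * x| ≤ w * K := fun hw hx => by
    rw [abs_mul, abs_of_nonneg hw]; exact mul_le_mul_of_nonneg_left hx hw
  have b₁ := bound (mul_nonneg hα hγ) h₁
  have b₂ := bound (mul_nonneg hα hδ) h₂
  have b₃ := bound (mul_nonneg hβ hγ) h₃
  have b₄ := bound (mul_nonneg hβ hδ) h₄
  rw [abs_le]
  constructor <;> linarith [le_abs_self (α * γ * x₁), neg_abs_le (α * γ * x₁),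
    le_abs_self (α * δ * x₂), neg_abs_le (α * δ * x₂), le_abs_self (β * γ * x₃),
    neg_abs_le (β * γ * x₃), le_abs_self (β * δ * x₄), neg_abs_le (β * δ * x₄)]

section SquareIntegrable

variable {Ω : Type*} [MeasurableSpace Ω] {P : Measure Ω}

theorem integral_abs_mul_le_of_memLp_two {f g : Ω → ℝ} (hf : MemLp f 2 P) (hg : MemLp g 2 P) :
    ∫ ω, |f ω * g ω| ∂P ≤ (∫ ω, f ω ^ 2 ∂P + ∫ ω, g ω ^ 2 ∂P) / 2 := by
  rw [← integral_add hf.integrable_sq hg.integrable_sq, ← integral_div]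
  refine integral_mono (hf.integrable_mul hg).abs
    ((hf.integrable_sq.add hg.integrable_sq).div_const 2) fun ω => ?_
  simp only [abs_mul]
  nlinarith [sq_nonneg (|f ω| - |g ω|), sq_abs (f ω), sq_abs (g ω)]

theorem integral_sub_mul_sub_eq {f₁ f₂ g₁ g₂ : Ω → ℝ} (hf₁ : MemLp f₁ 2 P) (hf₂ : MemLp f₂ 2 P)
    (hg₁ : MemLp g₁ 2 P) (hg₂ : MemLp g₂ 2 P) (α β γ δ : ℝ) :
    ∫ ω, (α * f₁ ω - β * f₂ ω) * (γ * g₁ ω - δ * g₂ ω) ∂P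
      = α * γ * ∫ ω, f₁ ω * g₁ ω ∂P - α * δ * ∫ ω, f₁ ω * g₂ ω ∂P
        - β * γ * ∫ ω, f₂ ω * g₁ ω ∂P + β * δ * ∫ ω, f₂ ω * g₂ ω ∂P := by
  have i₁₁ := (hf₁.integrable_mul hg₁).const_mul (α * γ)
  have i₁₂ := (hf₁.integrable_mul hg₂).const_mul (α * δ)
  have i₂₁ := (hf₂.integrable_mul hg₁).const_mul (β * γ)
  have i₂₂ := (hf₂.integrable_mul hg₂).const_mul (β * δ)
  simp only [Pi.mul_apply] at i₁₁ i₁₂ i₂₁ i₂₂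
  have expand : (fun ω => (α * f₁ ω - β * f₂ ω) * (γ * g₁ ω - δ * g₂ ω)) = fun ω =>
      α * γ * (f₁ ω * g₁ ω) - α * δ * (f₁ ω * g₂ ω) - β * γ * (f₂ ω * g₁ ω)
        + β * δ * (f₂ ω * g₂ ω) := by
    ext ω; ring
  rw [expand, integral_add ?_ i₂₂, integral_sub ?_ i₂₁, integral_sub i₁₁ i₁₂, integral_const_mul,
    integral_const_mul, integral_const_mul, integral_const_mul]
  exacts [i₁₁.sub i₁₂, (i₁₁.sub i₁₂).sub i₂₁]

end SquareIntegrable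

theorem ProbabilityTheory.Indep.indepFun_of_measurable {Ω β γ : Type*} [MeasurableSpace β]
    [MeasurableSpace γ] {m₁ m₂ : MeasurableSpace Ω} {_ : MeasurableSpace Ω} {P : Measure Ω}
    (h : Indep m₁ m₂ P) {f : Ω → β} {g : Ω → γ} (hf : Measurable[m₁] f) (hg : Measurable[m₂] g) :
    IndepFun f g P :=
  (IndepFun_iff_Indep f g P).2
    (indep_of_indep_of_le_right (indep_of_indep_of_le_left h hf.comap_le) hg.comap_le)

namespace IsFBM

variable {Ω : Type*} [MeasurableSpace Ω] {P : Measure Ω} {H : ℝ} {W : ℝ → Ω → ℝ}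

theorem memLp_two (hW : IsFBM P H W) {t : ℝ} (ht : t ∈ Icc (0 : ℝ) 1) : MemLp (W t) 2 P := by
  obtain ⟨v, hv⟩ := hW.2.1 1 (fun _ => 1) (fun _ => t) (fun _ => ht)
  simp only [Finset.univ_unique, Finset.sum_singleton, one_mul] at hv
  have h := memLp_id_gaussianReal (μ := 0) (v := v) 2
  rw [← hv, memLp_map_measure_iff aestronglyMeasurable_id (hW.1 t ht).aemeasurable] at h
  exact h

theorem integral_sub_mul_sub (hW : IsFBM P H W) {a b c d : ℝ} (ha : a ∈ Icc (0 : ℝ) 1)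
    (hb : b ∈ Icc (0 : ℝ) 1) (hc : c ∈ Icc (0 : ℝ) 1) (hd : d ∈ Icc (0 : ℝ) 1) :
    ∫ ω, (W b ω - W a ω) * (W d ω - W c ω) ∂P = fbmCov H a b c d := by
  have h := integral_sub_mul_sub_eq (hW.memLp_two hb) (hW.memLp_two ha) (hW.memLp_two hd)
    (hW.memLp_two hc) 1 1 1 1
  simp only [one_mul] at h
  rw [h, hW.2.2 b hb d hd, hW.2.2 b hb c hc, hW.2.2 a ha d hd, hW.2.2 a ha c hc, fbmCov]
  ring

theorem comp_projIcc (hW : IsFBM P H W) :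
    IsFBM P H fun t => W (projIcc (0 : ℝ) 1 zero_le_one t) := by
  have proj : ∀ {t : ℝ}, t ∈ Icc (0 : ℝ) 1 → (projIcc (0 : ℝ) 1 zero_le_one t : ℝ) = t :=
    fun ht => by rw [projIcc_of_mem _ ht]
  refine ⟨fun t _ => hW.1 _ (projIcc (0 : ℝ) 1 zero_le_one t).2, fun n a ts hts => ?_,
    fun s hs t ht => ?_⟩
  · simpa only [proj (hts _)] using hW.2.1 n a ts hts
  · simpa only [proj hs, proj ht] using hW.2.2 s hs t ht

end IsFBM

-- Paths are only assumed continuous on `[0,1]`; composing with the projection onto `[0,1]` makes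
-- them continuous on `ℝ`, hence jointly measurable, without changing them on `[0,1]`.
theorem measurable_uncurry_comp_projIcc {Ω : Type*} {_ : MeasurableSpace Ω} {W : ℝ → Ω → ℝ}
    (hW : ∀ t ∈ Icc (0 : ℝ) 1, Measurable (W t))
    (hcont : ∀ ω, ContinuousOn (fun t => W t ω) (Icc 0 1)) :
    Measurable (Function.uncurry fun t => W (projIcc (0 : ℝ) 1 zero_le_one t)) :=
  measurable_uncurry_of_continuous_of_measurable
    (fun ω => (hcont ω).comp_continuous (continuous_subtype_val.comp continuous_projIcc)
      fun t => (projIcc (0 : ℝ) 1 zero_le_one t).2)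
    fun t => hW _ (projIcc (0 : ℝ) 1 zero_le_one t).2

section Bridge

variable {Ω : Type*}

def bridge (W : ℝ → Ω → ℝ) (a b u : ℝ) (ω : Ω) : ℝ :=
  (u - a) * (W b ω - W u ω) - (b - u) * (W u ω - W a ω)

theorem measurable_uncurry_bridge [MeasurableSpace Ω] {W : ℝ → Ω → ℝ}
    (hW : Measurable (Function.uncurry W)) (a b : ℝ) :
    Measurable (Function.uncurry (bridge W a b)) := by
  unfold Function.uncurry bridge
  fun_prop

variable [MeasurableSpace Ω] {P : Measure Ω} {H : ℝ} {W : ℝ → Ω → ℝ}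

theorem IsFBM.memLp_bridge (hW : IsFBM P H W) {a b u : ℝ} (ha : 0 ≤ a) (hau : a ≤ u) (hub : u ≤ b)
    (hb : b ≤ 1) : MemLp (bridge W a b u) 2 P :=
  have hb' := hW.memLp_two (⟨by linarith, hb⟩ : b ∈ Icc (0 : ℝ) 1)
  have hu' := hW.memLp_two (⟨by linarith, by linarith⟩ : u ∈ Icc (0 : ℝ) 1)
  have ha' := hW.memLp_two (⟨ha, by linarith⟩ : a ∈ Icc (0 : ℝ) 1)
  ((hb'.sub hu').const_mul _).sub ((hu'.sub ha').const_mul _)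

theorem IsFBM.integral_bridge_mul_bridge (hW : IsFBM P H W) {a b c d u v : ℝ}
    (ha : a ∈ Icc (0 : ℝ) 1) (hb : b ∈ Icc (0 : ℝ) 1) (hc : c ∈ Icc (0 : ℝ) 1)
    (hd : d ∈ Icc (0 : ℝ) 1) (hu : u ∈ Icc (0 : ℝ) 1) (hv : v ∈ Icc (0 : ℝ) 1) :
    ∫ ω, bridge W a b u ω * bridge W c d v ω ∂P
      = (u - a) * (v - c) * fbmCov H u b v d - (u - a) * (d - v) * fbmCov H u b c v
        - (b - u) * (v - c) * fbmCov H a u v d + (b - u) * (d - v) * fbmCov H a u c v := by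
  have incr := fun {x y} (hx : x ∈ Icc (0 : ℝ) 1) (hy : y ∈ Icc (0 : ℝ) 1) =>
    (hW.memLp_two hy).sub (hW.memLp_two hx)
  rw [← hW.integral_sub_mul_sub hu hb hv hd, ← hW.integral_sub_mul_sub hu hb hc hv,
    ← hW.integral_sub_mul_sub ha hu hv hd, ← hW.integral_sub_mul_sub ha hu hc hv]
  exact integral_sub_mul_sub_eq (incr hu hb) (incr ha hu) (incr hv hd) (incr hc hv) _ _ _ _

theorem IsFBM.abs_integral_bridge_mul_bridge_le (hW : IsFBM P H W) {a b c d u v K : ℝ}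
    (ha : 0 ≤ a) (hau : a ≤ u) (hub : u ≤ b) (hb : b ≤ 1)
    (hc : 0 ≤ c) (hcv : c ≤ v) (hvd : v ≤ d) (hd : d ≤ 1)
    (h₁ : |fbmCov H u b v d| ≤ K) (h₂ : |fbmCov H u b c v| ≤ K) (h₃ : |fbmCov H a u v d| ≤ K)
    (h₄ : |fbmCov H a u c v| ≤ K) :
    |∫ ω, bridge W a b u ω * bridge W c d v ω ∂P| ≤ (b - a) * (d - c) * K := by
  rw [hW.integral_bridge_mul_bridge ⟨ha, by linarith⟩ ⟨by linarith, hb⟩ ⟨hc, by linarith⟩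
    ⟨by linarith, hd⟩ ⟨by linarith, by linarith⟩ ⟨by linarith, by linarith⟩]
  convert abs_mul_sub_mul_sub_mul_add_mul_le (sub_nonneg.2 hau) (sub_nonneg.2 hub)
    (sub_nonneg.2 hcv) (sub_nonneg.2 hvd) h₁ h₂ h₃ h₄ using 2
  ring

end Bridge

section Fubini

variable {Ω : Type*}

theorem measurable_intervalIntegral_of_uncurry {_ : MeasurableSpace Ω} {X : ℝ → Ω → ℝ}
    (hX : Measurable (Function.uncurry X)) (a b : ℝ) :
    Measurable fun ω => ∫ u in a..b, X u ω := by
  have h : ∀ s : Set ℝ, Measurable fun ω => ∫ u in s, X u ω := fun s =>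
    (hX.stronglyMeasurable.integral_prod_left' (μ := volume.restrict s)).measurable
  exact (h _).sub (h _)

variable [MeasurableSpace Ω] {P : Measure Ω} [SFinite P]

theorem abs_integral_intervalIntegral_mul_le {X Y : ℝ → Ω → ℝ}
    (hX : Measurable (Function.uncurry X)) (hY : Measurable (Function.uncurry Y))
    {a b c d M C : ℝ} (hab : a ≤ b) (hcd : c ≤ d)
    (hX₂ : ∀ u ∈ Icc a b, MemLp (X u) 2 P) (hY₂ : ∀ v ∈ Icc c d, MemLp (Y v) 2 P)
    (hXM : ∀ u ∈ Icc a b, ∫ ω, X u ω ^ 2 ∂P ≤ M) (hYM : ∀ v ∈ Icc c d, ∫ ω, Y v ω ^ 2 ∂P ≤ M)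
    (hC : ∀ u ∈ Icc a b, ∀ v ∈ Icc c d, |∫ ω, X u ω * Y v ω ∂P| ≤ C) :
    |∫ ω, (∫ u in a..b, X u ω) * (∫ v in c..d, Y v ω) ∂P| ≤ (b - a) * (d - c) * C := by
  set μ := (volume.restrict (Ioc a b)).prod (volume.restrict (Ioc c d))
  have mem : ∀ᵐ p ∂μ, p.1 ∈ Icc a b ∧ p.2 ∈ Icc c d := by
    rw [show μ = (volume.prod volume).restrict (Ioc a b ×ˢ Ioc c d) from
      Measure.prod_restrict _ _]
    filter_upwards [ae_restrict_mem (measurableSet_Ioc.prod measurableSet_Ioc)] with p hp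
    exact ⟨Ioc_subset_Icc_self hp.1, Ioc_subset_Icc_self hp.2⟩
  set F : (ℝ × ℝ) × Ω → ℝ := fun q => X q.1.1 q.2 * Y q.1.2 q.2
  have hF_meas : Measurable F :=
    (hX.comp (measurable_fst.fst.prodMk measurable_snd)).mul
      (hY.comp (measurable_fst.snd.prodMk measurable_snd))
  have hF : Integrable F (μ.prod P) := by
    refine (integrable_prod_iff hF_meas.aestronglyMeasurable).2 ⟨?_, ?_⟩
    · filter_upwards [mem] with p hp using (hX₂ _ hp.1).integrable_mul (hY₂ _ hp.2)
    · refine (integrable_const M).mono' hF_meas.norm.aestronglyMeasurable.integral_prod_right' ?_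
      filter_upwards [mem] with p hp
      rw [Real.norm_of_nonneg (integral_nonneg fun _ => norm_nonneg _)]
      simp only [F, Real.norm_eq_abs]
      linarith [integral_abs_mul_le_of_memLp_two (hX₂ _ hp.1) (hY₂ _ hp.2), hXM _ hp.1, hYM _ hp.2]
  have swap : ∫ ω, (∫ u in a..b, X u ω) * (∫ v in c..d, Y v ω) ∂P
      = ∫ p, ∫ ω, F (p, ω) ∂P ∂μ := by
    rw [integral_integral_swap hF]
    congr 1 with ω
    rw [intervalIntegral.integral_of_le hab, intervalIntegral.integral_of_le hcd,
      ← integral_prod_mul]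
  have volume_rect : μ.real univ = (b - a) * (d - c) := by
    rw [measureReal_def, ← univ_prod_univ, Measure.prod_prod, Measure.restrict_apply_univ,
      Measure.restrict_apply_univ, Real.volume_Ioc, Real.volume_Ioc, ENNReal.toReal_mul,
      ENNReal.toReal_ofReal (sub_nonneg.2 hab), ENNReal.toReal_ofReal (sub_nonneg.2 hcd)]
  rw [swap, ← volume_rect, mul_comm]
  refine norm_integral_le_of_norm_le_const (f := fun p => ∫ ω, F (p, ω) ∂P) ?_
  filter_upwards [mem] with p hp
  exact hC _ hp.1 _ hp.2

end Fubini

section BridgeMean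

variable {Ω : Type*}

noncomputable def bridgeMean (W : ℝ → Ω → ℝ) (s t : ℝ) (ω : Ω) : ℝ :=
  ((t - s) ^ 2)⁻¹ * ∫ u in s..t, bridge W s t u ω

theorem Yproc_eq_bridgeMean_mul (W1 W2 : ℝ → Ω → ℝ) (s t : ℝ) (ω : Ω) :
    Yproc W1 W2 s t ω = bridgeMean W1 s t ω * (W2 t ω - W2 s ω) :=
  rfl

theorem bridgeMean_congr {W V : ℝ → Ω → ℝ} {s t : ℝ} {ω : Ω}
    (h : EqOn (fun u => W u ω) (fun u => V u ω) (uIcc s t)) :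
    bridgeMean W s t ω = bridgeMean V s t ω := by
  unfold bridgeMean
  congr 1
  refine intervalIntegral.integral_congr fun u hu => ?_
  simp only [bridge, h hu, h left_mem_uIcc, h right_mem_uIcc]

theorem bridgeMean_comp_projIcc (W : ℝ → Ω → ℝ) {s t : ℝ} (hs : 0 ≤ s) (hst : s ≤ t)
    (ht : t ≤ 1) :
    bridgeMean (fun u => W (projIcc (0 : ℝ) 1 zero_le_one u)) s t = bridgeMean W s t :=
  funext fun ω => bridgeMean_congr fun u hu => by
    rw [uIcc_of_le hst] at hu
    simp only [projIcc_of_mem _ (⟨hs.trans hu.1, hu.2.trans ht⟩ : u ∈ Icc (0 : ℝ) 1)]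

theorem measurable_bridgeMean {_ : MeasurableSpace Ω} {W : ℝ → Ω → ℝ}
    (hW : Measurable (Function.uncurry W)) (s t : ℝ) : Measurable (bridgeMean W s t) :=
  (measurable_intervalIntegral_of_uncurry (measurable_uncurry_bridge hW s t) s t).const_mul _

theorem measurable_bridgeMean_of_continuousOn {_ : MeasurableSpace Ω} {W : ℝ → Ω → ℝ}
    (hW : ∀ t ∈ Icc (0 : ℝ) 1, Measurable (W t))
    (hcont : ∀ ω, ContinuousOn (fun t => W t ω) (Icc 0 1)) {s t : ℝ} (hs : 0 ≤ s) (hst : s ≤ t)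
    (ht : t ≤ 1) : Measurable (bridgeMean W s t) :=
  bridgeMean_comp_projIcc W hs hst ht ▸
    measurable_bridgeMean (measurable_uncurry_comp_projIcc hW hcont) s t

variable [MeasurableSpace Ω] {P : Measure Ω} {H : ℝ} {W : ℝ → Ω → ℝ}

theorem IsFBM.integral_bridge_sq_le_one (hW : IsFBM P H W) (hH : 0 ≤ H) {a b u : ℝ} (ha : 0 ≤ a)
    (hau : a ≤ u) (hub : u ≤ b) (hb : b ≤ 1) : ∫ ω, bridge W a b u ω ^ 2 ∂P ≤ 1 := by
  have ha' : a ∈ Icc (0 : ℝ) 1 := ⟨ha, by linarith⟩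
  have hb' : b ∈ Icc (0 : ℝ) 1 := ⟨by linarith, hb⟩
  have hu' : u ∈ Icc (0 : ℝ) 1 := ⟨by linarith, by linarith⟩
  have h := hW.abs_integral_bridge_mul_bridge_le ha hau hub hb ha hau hub hb
    (abs_fbmCov_le_one hH hu' hb' hu' hb') (abs_fbmCov_le_one hH hu' hb' ha' hu')
    (abs_fbmCov_le_one hH ha' hu' hu' hb') (abs_fbmCov_le_one hH ha' hu' ha' hu')
  simp only [← sq] at h
  have hba : (b - a) ^ 2 * 1 ≤ 1 := by nlinarith
  exact (le_abs_self _).trans (h.trans hba)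

theorem IsFBM.abs_integral_bridgeMean_mul_le [SFinite P] (hW : IsFBM P H W)
    (hcont : ∀ ω, ContinuousOn (fun t => W t ω) (Icc 0 1)) (hH₀ : 0 ≤ H) (hH₁ : H ≤ 1 / 2)
    {s' t' s t : ℝ} (h0 : 0 ≤ s') (h1 : s' < t') (h2 : t' ≤ s) (h3 : s < t) (h4 : t ≤ 1) :
    |∫ ω, bridgeMean W s' t' ω * bridgeMean W s t ω ∂P| ≤ -fbmCov H s' t' s t := by
  rw [← bridgeMean_comp_projIcc W h0 h1.le (by linarith),
    ← bridgeMean_comp_projIcc W (by linarith) h3.le h4]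
  have hV := hW.comp_projIcc
  have hV_meas := measurable_uncurry_comp_projIcc hW.1 hcont
  have cross := abs_integral_intervalIntegral_mul_le (P := P) (M := 1)
    (measurable_uncurry_bridge hV_meas s' t') (measurable_uncurry_bridge hV_meas s t) h1.le h3.le
    (fun u hu => hV.memLp_bridge h0 hu.1 hu.2 (by linarith))
    (fun v hv => hV.memLp_bridge (by linarith) hv.1 hv.2 h4)
    (fun u hu => hV.integral_bridge_sq_le_one hH₀ h0 hu.1 hu.2 (by linarith))
    (fun v hv => hV.integral_bridge_sq_le_one hH₀ (by linarith) hv.1 hv.2 h4)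
    fun u hu v hv => hV.abs_integral_bridge_mul_bridge_le h0 hu.1 hu.2 (by linarith)
      (by linarith) hv.1 hv.2 h4
      (abs_fbmCov_le_neg_fbmCov hH₀ hH₁ hu.1 hu.2 le_rfl h2 hv.1 hv.2 le_rfl)
      (abs_fbmCov_le_neg_fbmCov hH₀ hH₁ hu.1 hu.2 le_rfl h2 le_rfl hv.1 hv.2)
      (abs_fbmCov_le_neg_fbmCov hH₀ hH₁ le_rfl hu.1 hu.2 h2 hv.1 hv.2 le_rfl)
      (abs_fbmCov_le_neg_fbmCov hH₀ hH₁ le_rfl hu.1 hu.2 h2 le_rfl hv.1 hv.2)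
  have hc' : 0 < t' - s' := by linarith
  have hc : 0 < t - s := by linarith
  unfold bridgeMean
  simp only [mul_mul_mul_comm, integral_const_mul, abs_mul,
    abs_of_pos (by positivity : (0 : ℝ) < ((t' - s') ^ 2)⁻¹ * ((t - s) ^ 2)⁻¹)]
  calc _ ≤ ((t' - s') ^ 2)⁻¹ * ((t - s) ^ 2)⁻¹
        * ((t' - s') * (t - s) * ((t' - s') * (t - s) * -fbmCov H s' t' s t)) := by gcongr
    _ = -fbmCov H s' t' s t := by field_simp

theorem integral_Yproc_mul_Yproc (hW_meas : ∀ t ∈ Icc (0 : ℝ) 1, Measurable (W t)) {W₂ : ℝ → Ω → ℝ}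
    (hW₂ : IsFBM P H W₂) (hcont : ∀ ω, ContinuousOn (fun t => W t ω) (Icc 0 1))
    (hindep : Indep
      (⨆ t ∈ Icc (0 : ℝ) 1, MeasurableSpace.comap (W t) inferInstance)
      (⨆ t ∈ Icc (0 : ℝ) 1, MeasurableSpace.comap (W₂ t) inferInstance) P)
    {s' t' s t : ℝ} (h0 : 0 ≤ s') (h1 : s' ≤ t') (h2 : t' ≤ s) (h3 : s ≤ t) (h4 : t ≤ 1) :
    ∫ ω, Yproc W W₂ s' t' ω * Yproc W W₂ s t ω ∂P
      = (∫ ω, bridgeMean W s' t' ω * bridgeMean W s t ω ∂P) * fbmCov H s' t' s t := by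
  have mem : ∀ {x}, 0 ≤ x → x ≤ 1 → x ∈ Icc (0 : ℝ) 1 := fun hx₀ hx₁ => ⟨hx₀, hx₁⟩
  have generated : ∀ (V : ℝ → Ω → ℝ) {x}, x ∈ Icc (0 : ℝ) 1 →
      Measurable[⨆ r ∈ Icc (0 : ℝ) 1, MeasurableSpace.comap (V r) inferInstance] (V x) :=
    fun V _ hx => measurable_iff_comap_le.2
      (le_biSup (fun r => MeasurableSpace.comap (V r) inferInstance) hx)
  have hX : Measurable[⨆ r ∈ Icc (0 : ℝ) 1, MeasurableSpace.comap (W r) inferInstance]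
      fun ω => bridgeMean W s' t' ω * bridgeMean W s t ω :=
    (measurable_bridgeMean_of_continuousOn (fun _ hx => generated W hx) hcont h0 h1
      (by linarith)).mul
      (measurable_bridgeMean_of_continuousOn (fun _ hx => generated W hx) hcont (by linarith) h3 h4)
  have hZ : Measurable[⨆ r ∈ Icc (0 : ℝ) 1, MeasurableSpace.comap (W₂ r) inferInstance]
      fun ω => (W₂ t' ω - W₂ s' ω) * (W₂ t ω - W₂ s ω) :=
    ((generated W₂ (mem (by linarith) (by linarith))).sub (generated W₂ (mem h0 (by linarith)))).mul
      ((generated W₂ (mem (by linarith) h4)).sub (generated W₂ (mem (by linarith) (by linarith))))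
  have hX_ae : AEStronglyMeasurable (fun ω => bridgeMean W s' t' ω * bridgeMean W s t ω) P :=
    (hX.mono (iSup₂_le fun r hr => (hW_meas r hr).comap_le) le_rfl).aestronglyMeasurable
  have hZ_ae : AEStronglyMeasurable (fun ω => (W₂ t' ω - W₂ s' ω) * (W₂ t ω - W₂ s ω)) P :=
    (hZ.mono (iSup₂_le fun r hr => (hW₂.1 r hr).comap_le) le_rfl).aestronglyMeasurable
  rw [← hW₂.integral_sub_mul_sub (mem h0 (by linarith)) (mem (by linarith) (by linarith))
      (mem (by linarith) (by linarith)) (mem (by linarith) h4),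
    ← (hindep.indepFun_of_measurable hX hZ).integral_mul_eq_mul_integral (μ := P) hX_ae hZ_ae]
  congr 1 with ω
  simp only [Yproc_eq_bridgeMean_mul, Pi.mul_apply]
  ring

end BridgeMean

theorem Yproc_cov_bound_general {Ω : Type*} [MeasurableSpace Ω]
    (P : Measure Ω) [IsProbabilityMeasure P]
    (H : ℝ) (hH : H ∈ Ioo (0 : ℝ) (1 / 2)) (W1 W2 : ℝ → Ω → ℝ)
    (hW1 : IsFBM P H W1) (hW2 : IsFBM P H W2)
    (hcont1 : ∀ ω, ContinuousOn (fun u => W1 u ω) (Icc 0 1))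
    (hindep : Indep
      (⨆ t ∈ Icc (0 : ℝ) 1, MeasurableSpace.comap (W1 t) inferInstance)
      (⨆ t ∈ Icc (0 : ℝ) 1, MeasurableSpace.comap (W2 t) inferInstance) P)
    (s' t' s t : ℝ) (h0 : 0 ≤ s') (h1 : s' < t') (h2 : t' ≤ s) (h3 : s < t) (h4 : t ≤ 1) :
    |∫ ω, Yproc W1 W2 s' t' ω * Yproc W1 W2 s t ω ∂P| ≤ (fbmCov H s' t' s t) ^ 2 := by
  have hH₀ : 0 ≤ H := hH.1.le
  have hH₁ : H ≤ 1 / 2 := hH.2.le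
  have hρ : fbmCov H s' t' s t ≤ 0 := fbmCov_nonpos hH₀ hH₁ h1.le h2 h3.le
  have hX := hW1.abs_integral_bridgeMean_mul_le hcont1 hH₀ hH₁ h0 h1 h2 h3 h4
  rw [integral_Yproc_mul_Yproc hW1.1 hW2 hcont1 hindep h0 h1.le h2 h3.le h4, abs_mul]
  calc _ ≤ -fbmCov H s' t' s t * |fbmCov H s' t' s t| := by gcongr
    _ = fbmCov H s' t' s t ^ 2 := by rw [abs_of_nonpos hρ]; ring

/-- For two independent fractional Brownian motions `W¹, W²` with Hurst parameter
`H ∈ (0,1/2)` and continuous sample paths, and `0 ≤ s' < t' ≤ s < t ≤ 1`: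
`|E(Y_{s',t'} Y_{s,t})| ≤ ρ_H(s',t';s,t)²`. -/
theorem Yproc_cov_bound {Ω : Type*} [MeasurableSpace Ω]
    (P : Measure Ω) [IsProbabilityMeasure P]
    (H : ℝ) (hH : H ∈ Ioo (0 : ℝ) (1 / 2)) (W1 W2 : ℝ → Ω → ℝ)
    (hW1 : IsFBM P H W1) (hW2 : IsFBM P H W2)
    (hcont1 : ∀ ω, ContinuousOn (fun u => W1 u ω) (Icc 0 1))
    (hcont2 : ∀ ω, ContinuousOn (fun u => W2 u ω) (Icc 0 1))
    (hindep : Indep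
      (⨆ t ∈ Icc (0 : ℝ) 1, MeasurableSpace.comap (W1 t) inferInstance)
      (⨆ t ∈ Icc (0 : ℝ) 1, MeasurableSpace.comap (W2 t) inferInstance) P)
    (s' t' s t : ℝ) (h0 : 0 ≤ s') (h1 : s' < t') (h2 : t' ≤ s) (h3 : s < t) (h4 : t ≤ 1) :
    |∫ ω, Yproc W1 W2 s' t' ω * Yproc W1 W2 s t ω ∂P| ≤ (fbmCov H s' t' s t) ^ 2 :=
  Yproc_cov_bound_general P H hH W1 W2 hW1 hW2 hcont1 hindep s' t' s t h0 h1 h2 h3 h4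
end
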